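/- Let X be a real separated locally convex space, let g : X → ℝ ∪ {+∞} be a proper lower semicontinuous sublinear function, and let x* ∈ X*. The following assertions are equivalent: (a) x* ∈ qri ∂g(0) (quasi-relative interior taken in X* with the weak* topology); (b) the set [g ≤ x*] := {x ∈ X : g(x) ≤ ⟨x, x*⟩} is a linear subspace of X; (b') L_{x*} = [g ≤ x*]; (c) x* ∈ ∂g(0) and [g = x*] := {x ∈ X : g(x) = ⟨x, x*⟩} is a linear subspace of X; (c') x* ∈ ∂g(0) and L_{x*} = [g = x*]. -/

import Mathlib

open Filter Topology Set Pointwise TopologicalSpace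

noncomputable section

section Defs

variable {E : Type*} [AddCommGroup E] [Module ℝ E]

/-- Recession function of `f` based at `x₀ ∈ dom f`, as the supremum of the
(nondecreasing) difference quotients `(f (x₀ + t • u) - f x₀) / t`, `t > 0`. -/
def recAt (f : E → EReal) (x₀ u : E) : EReal :=
  ⨆ t ∈ Set.Ioi (0 : ℝ), ((t⁻¹ : ℝ) : EReal) * (f (x₀ + t • u) - f x₀)

/-- Sublinear function: positively homogeneous and subadditive. -/
def SublinearFn (g : E → EReal) : Prop :=
  g 0 = 0 ∧ (∀ x : E, ∀ t : ℝ, 0 < t → g (t • x) = (t : EReal) * g x) ∧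
    ∀ x y : E, g (x + y) ≤ g x + g y

variable [TopologicalSpace E]

/-- `Γ(E)`: proper lower semicontinuous convex functions. -/
def GammaFn (f : E → EReal) : Prop :=
  (∃ x, f x ≠ ⊤) ∧ (∀ x, f x ≠ ⊥) ∧
    Convex ℝ {p : E × ℝ | f p.1 ≤ (p.2 : EReal)} ∧ LowerSemicontinuous f

/-- Subdifferential at `0`, as a subset of the weak* dual. -/
def subdiff0 (g : E → EReal) : Set (WeakDual ℝ E) :=
  {xs | ∀ x, (xs x : EReal) ≤ g x}

/-- Fenchel conjugate. -/
def conjFn (f : E → EReal) (xs : WeakDual ℝ E) : EReal :=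
  ⨆ x, ((xs x : EReal) - f x)

/-- Domain of the conjugate. -/
def domConj (f : E → EReal) : Set (WeakDual ℝ E) := {xs | conjFn f xs ≠ ⊤}

/-- `xs ∈ ∂f(x)`. -/
def inSubdiff (f : E → EReal) (xs : WeakDual ℝ E) (x : E) : Prop :=
  f x ≠ ⊤ ∧ f x ≠ ⊥ ∧ ∀ x' : E, ((xs x' - xs x : ℝ) : EReal) + f x ≤ f x'

/-- Directionally coercive function. -/
def DirCoercive (f : E → EReal) : Prop :=
  ∀ x : E, ∀ u : E, u ≠ 0 → Filter.Tendsto (fun t : ℝ => f (x + t • u)) Filter.atTop (nhds ⊤)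

/-- The set `L_{x*} = {x | g(x) = ⟨x, x*⟩ and g(-x) = -⟨x, x*⟩}`. -/
def LxSet (g : E → EReal) (xs : WeakDual ℝ E) : Set E :=
  {x | g x = (xs x : EReal) ∧ g (-x) = ((-(xs x) : ℝ) : EReal)}

end Defs

section QRI

variable {F : Type*} [AddCommGroup F] [Module ℝ F] [TopologicalSpace F]

/-- The cone `ℝ₊ (A - a)`. -/
def coneGen (A : Set F) (a : F) : Set F :=
  {x | ∃ t : ℝ, 0 ≤ t ∧ ∃ b ∈ A, x = t • (b - a)}

/-- Quasi-relative interior. -/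
def qri (A : Set F) : Set F :=
  {a ∈ A | ∃ S : Submodule ℝ F, closure (coneGen A a) = (S : Set F)}

/-- Quasi-interior. -/
def qi (A : Set F) : Set F :=
  {a ∈ A | closure (coneGen A a) = Set.univ}

/-- Algebraic core of a set. -/
def coreSet (A : Set F) : Set F :=
  {a : F | ∀ u : F, ∃ δ : ℝ, 0 < δ ∧ ∀ t ∈ Set.Icc (0 : ℝ) δ, a + t • u ∈ A}

end QRI

/-!
Sublinearity and lower semicontinuity make the epigraph of `g` a closed convex cone, so Farkas'
lemma gives `g x ≤ r ↔ ∀ y ∈ ∂g(0), ⟨x, y⟩ ≤ r`. A point `a` of a convex set `A` in a locally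
convex space lies in `qri A` iff every continuous linear functional minimised over `A` at `a` is
constant on `A`, and the continuous functionals on the weak* dual are the evaluations at points
of `X`. Together these turn `x* ∈ qri ∂g(0)` into the symmetry of the sublevel cone `[g ≤ x*]`,
i.e. into its being a subspace. The symmetric part (lineality space) of that cone is `L_{x*}`, because
`g x + g (-x) ≥ g 0 = 0`, and `[g ≤ x*] = [g = x*]` as soon as `x* ∈ ∂g(0)`.
-/

namespace PointedCone

variable {R E : Type*} [Ring R] [LinearOrder R] [IsOrderedRing R] [AddCommGroup E] [Module R E]

theorem coe_lineal_eq_iff (C : PointedCone R E) :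
    (C.lineal : Set E) = C ↔ ∀ x ∈ C, -x ∈ C := by
  refine ⟨fun h x hx => ?_, fun h => ?_⟩
  · rw [← SetLike.mem_coe, ← h] at hx
    exact (mem_lineal.1 hx).2
  · ext x
    exact ⟨fun hx => (mem_lineal.1 hx).1, fun hx => mem_lineal.2 ⟨hx, h x hx⟩⟩

theorem exists_submodule_coe_eq_iff (C : PointedCone R E) :
    (∃ S : Submodule R E, (C : Set E) = S) ↔ ∀ x ∈ C, -x ∈ C := by
  refine ⟨fun ⟨S, hS⟩ x hx => ?_, fun h => ⟨C.lineal, (C.coe_lineal_eq_iff.2 h).symm⟩⟩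
  rw [← SetLike.mem_coe, hS] at hx ⊢
  exact S.neg_mem hx

end PointedCone

section QuasiRelativeInterior

variable {E : Type*} [AddCommGroup E] [Module ℝ E]

def Convex.coneAt {A : Set E} (hA : Convex ℝ A) {a : E} (ha : a ∈ A) : PointedCone ℝ E where
  carrier := coneGen A a
  zero_mem' := ⟨0, le_rfl, a, ha, by simp⟩
  add_mem' := by
    rintro _ _ ⟨t, ht, b, hb, rfl⟩ ⟨s, hs, d, hd, rfl⟩
    rcases (add_nonneg ht hs).eq_or_lt with hts | hts
    · obtain ⟨rfl, rfl⟩ : t = 0 ∧ s = 0 := by constructor <;> linarith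
      exact ⟨0, le_rfl, a, ha, by simp⟩
    refine ⟨t + s, hts.le, (t / (t + s)) • b + (s / (t + s)) • d,
      hA hb hd (by positivity) (by positivity) (by field_simp), ?_⟩
    simp only [smul_sub, smul_add, smul_smul, mul_div_cancel₀ _ hts.ne', add_smul]
    abel
  smul_mem' := by
    rintro ⟨c, hc⟩ _ ⟨t, ht, b, hb, rfl⟩
    exact ⟨c * t, mul_nonneg hc ht, b, hb, by rw [Nonneg.mk_smul, smul_smul]⟩

theorem sub_mem_coneGen {A : Set E} {a b : E} (hb : b ∈ A) : b - a ∈ coneGen A a :=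
  ⟨1, zero_le_one, b, hb, (one_smul ℝ _).symm⟩

variable [TopologicalSpace E] [IsTopologicalAddGroup E] [ContinuousSMul ℝ E]
  [LocallyConvexSpace ℝ E]

theorem mem_qri_iff {A : Set E} (hA : Convex ℝ A) {a : E} :
    a ∈ qri A ↔ a ∈ A ∧ ∀ f : E →L[ℝ] ℝ, (∀ b ∈ A, f a ≤ f b) → ∀ b ∈ A, f b = f a := by
  refine ⟨fun ⟨ha, S, hS⟩ => ⟨ha, fun f hf b hb => ?_⟩, fun ⟨ha, h⟩ => ⟨ha, ?_⟩⟩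
  · have hnonneg : ∀ w ∈ (S : Set E), 0 ≤ f w := by
      rw [← hS]
      refine fun w hw => closure_minimal ?_ (isClosed_le continuous_const f.continuous) hw
      rintro _ ⟨t, ht, c, hc, rfl⟩
      simpa using mul_nonneg ht (sub_nonneg.2 (hf c hc))
    have hba : b - a ∈ S := by
      rw [← SetLike.mem_coe, ← hS]
      exact subset_closure (sub_mem_coneGen hb)
    have h₁ := hnonneg _ hba
    have h₂ := hnonneg _ (S.neg_mem hba)
    simp only [map_sub, map_neg] at h₁ h₂
    linarith
  · let K : ProperCone ℝ E := Submodule.closure (hA.coneAt ha)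
    suffices ∀ w ∈ K, -w ∈ K from K.toPointedCone.exists_submodule_coe_eq_iff.2 this
    intro w hw
    by_contra hnw
    obtain ⟨f, hfK, hfw⟩ := K.hyperplane_separation_point hnw
    have hfA : ∀ b ∈ A, f b = f a := h f fun b hb => by
      simpa using hfK (b - a) (subset_closure (sub_mem_coneGen hb))
    have hker : (K : Set E) ⊆ {w | f w = 0} := by
      refine closure_minimal ?_ (isClosed_eq f.continuous continuous_const)
      rintro _ ⟨t, -, b, hb, rfl⟩
      simp [hfA b hb]
    simp only [map_neg, neg_lt_zero] at hfw
    exact hfw.ne' (hker hw)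

end QuasiRelativeInterior

section WeakDual

variable {X : Type*} [AddCommGroup X] [Module ℝ X] [TopologicalSpace X]

theorem WeakDual.mem_qri_iff {A : Set (WeakDual ℝ X)} (hA : Convex ℝ A) {a : WeakDual ℝ X} :
    a ∈ qri A ↔ a ∈ A ∧ ∀ x : X, (∀ b ∈ A, a x ≤ b x) → ∀ b ∈ A, b x = a x := by
  have : LocallyConvexSpace ℝ (WeakDual ℝ X) := WeakBilin.locallyConvexSpace
  rw [_root_.mem_qri_iff hA]
  refine and_congr_right fun _ => ⟨fun h x => h (WeakBilin.eval (topDualPairing ℝ X) x), ?_⟩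
  intro h f
  obtain ⟨x, rfl⟩ := LinearMap.dualEmbedding_surjective (topDualPairing ℝ X) f
  exact h x

end WeakDual

theorem EReal.eq_coe_and_eq_neg_coe {a b : EReal} {r : ℝ} (ha : a ≤ r)
    (hb : b ≤ ((-r : ℝ) : EReal)) (hab : 0 ≤ a + b) : a = r ∧ b = ((-r : ℝ) : EReal) := by
  have hne : ∀ {c d : EReal}, 0 ≤ c + d → c ≠ ⊥ := by
    rintro c d h rfl
    simp at h
  lift a to ℝ using ⟨ne_top_of_le_ne_top (EReal.coe_ne_top _) ha, hne hab⟩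
  lift b to ℝ using
    ⟨ne_top_of_le_ne_top (EReal.coe_ne_top _) hb, hne (add_comm (a : EReal) b ▸ hab)⟩
  norm_cast at *
  constructor <;> linarith

section Subdifferential

variable {X : Type*} [AddCommGroup X] [Module ℝ X] [TopologicalSpace X] {g : X → EReal}
  {xs : WeakDual ℝ X}

theorem mem_subdiff0_iff : xs ∈ subdiff0 g ↔ ∀ x, ∀ s : ℝ, g x ≤ s → xs x ≤ s :=
  ⟨fun h x _ hs => EReal.coe_le_coe_iff.1 ((h x).trans hs),
    fun h x => EReal.le_of_forall_lt_iff_le.1 fun z hz => EReal.coe_le_coe_iff.2 (h x z hz.le)⟩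

theorem convex_subdiff0 : Convex ℝ (subdiff0 g) := by
  intro p hp q hq a b ha hb hab
  rw [mem_subdiff0_iff] at hp hq ⊢
  exact fun x s hs => convex_Iic s (hp x s hs) (hq x s hs) ha hb hab

theorem setOf_le_eq_setOf_eq_of_mem_subdiff0 (hxs : xs ∈ subdiff0 g) :
    {x : X | g x ≤ (xs x : EReal)} = {x : X | g x = (xs x : EReal)} :=
  Set.ext fun x => ⟨fun h => h.antisymm (hxs x), le_of_eq⟩

theorem neg_inv_smul_mem_subdiff0 {φ : X →L[ℝ] ℝ} {α : ℝ} (hα : 0 < α)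
    (hφ : ∀ x, ∀ s : ℝ, g x ≤ s → 0 ≤ φ x + s * α) :
    StrongDual.toWeakDual (-α⁻¹ • φ) ∈ subdiff0 g := by
  rw [mem_subdiff0_iff]
  intro x s hs
  have := hφ x s hs
  simp only [StrongDual.coe_toWeakDual, FunLike.coe_smul, Pi.smul_apply, smul_eq_mul]
  rw [neg_mul, neg_le, ← mul_le_mul_iff_of_pos_left hα, mul_inv_cancel_left₀ hα.ne']
  linarith

end Subdifferential

namespace SublinearFn

section Algebraic

variable {X : Type*} [AddCommGroup X] [Module ℝ X] {g : X → EReal}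

theorem add_neg_nonneg (hg : SublinearFn g) (x : X) : 0 ≤ g x + g (-x) := by
  simpa [hg.1] using hg.2.2 x (-x)

theorem le_coe_add (hg : SublinearFn g) {x y : X} {s t : ℝ} (hx : g x ≤ s) (hy : g y ≤ t) :
    g (x + y) ≤ ((s + t : ℝ) : EReal) :=
  (hg.2.2 x y).trans (by rw [EReal.coe_add]; exact add_le_add hx hy)

theorem le_coe_smul (hg : SublinearFn g) {x : X} {c s : ℝ} (hc : 0 ≤ c) (hx : g x ≤ s) :
    g (c • x) ≤ ((c * s : ℝ) : EReal) := by
  rcases hc.eq_or_lt with rfl | hc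
  · simp [hg.1]
  · rw [hg.2.1 x c hc, EReal.coe_mul]
    exact mul_le_mul_of_nonneg_left hx (by exact_mod_cast hc.le)

def epigraphCone (hg : SublinearFn g) : PointedCone ℝ (X × ℝ) where
  carrier := {p | g p.1 ≤ p.2}
  zero_mem' := by simp [hg.1]
  add_mem' hp hq := hg.le_coe_add hp hq
  smul_mem' c _ hp := hg.le_coe_smul c.2 hp

variable [TopologicalSpace X] {xs : WeakDual ℝ X}

def sublevelCone (hg : SublinearFn g) (xs : WeakDual ℝ X) : PointedCone ℝ X where
  carrier := {x | g x ≤ (xs x : EReal)}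
  zero_mem' := by simp [hg.1]
  add_mem' {x y} hx hy := by simpa using hg.le_coe_add hx hy
  smul_mem' c x hx := by
    change g ((c : ℝ) • x) ≤ ((xs ((c : ℝ) • x) : ℝ) : EReal)
    rw [map_smul, smul_eq_mul]
    exact hg.le_coe_smul c.2 hx

theorem mem_sublevelCone (hg : SublinearFn g) {x : X} :
    x ∈ hg.sublevelCone xs ↔ g x ≤ (xs x : EReal) :=
  Iff.rfl

theorem lxSet_eq_lineal (hg : SublinearFn g) :
    LxSet g xs = (hg.sublevelCone xs).lineal := by
  ext x
  simp only [LxSet, SetLike.mem_coe, PointedCone.mem_lineal, mem_sublevelCone, map_neg]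
  exact ⟨fun ⟨h₁, h₂⟩ => ⟨h₁.le, h₂.le⟩,
    fun ⟨h₁, h₂⟩ => EReal.eq_coe_and_eq_neg_coe h₁ h₂ (hg.add_neg_nonneg x)⟩

theorem exists_submodule_eq_setOf_le_iff (hg : SublinearFn g) :
    (∃ S : Submodule ℝ X, {x : X | g x ≤ (xs x : EReal)} = (S : Set X)) ↔
      ∀ x, g x ≤ (xs x : EReal) → g (-x) ≤ (xs (-x) : EReal) :=
  (hg.sublevelCone xs).exists_submodule_coe_eq_iff

theorem lxSet_eq_setOf_le_iff (hg : SublinearFn g) :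
    LxSet g xs = {x : X | g x ≤ (xs x : EReal)} ↔
      ∀ x, g x ≤ (xs x : EReal) → g (-x) ≤ (xs (-x) : EReal) := by
  rw [hg.lxSet_eq_lineal]
  exact (hg.sublevelCone xs).coe_lineal_eq_iff

theorem mem_subdiff0_of_forall_neg_le (hg : SublinearFn g)
    (h : ∀ x, g x ≤ (xs x : EReal) → g (-x) ≤ (xs (-x) : EReal)) : xs ∈ subdiff0 g := by
  intro x
  rcases le_or_gt (g x) (xs x) with hx | hx
  · have := h x hx
    rw [map_neg] at this
    exact (EReal.eq_coe_and_eq_neg_coe hx this (hg.add_neg_nonneg x)).1.ge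
  · exact hx.le

end Algebraic

section Separation

variable {X : Type*} [AddCommGroup X] [Module ℝ X] [TopologicalSpace X]
  [IsTopologicalAddGroup X] [ContinuousSMul ℝ X] [LocallyConvexSpace ℝ X] {g : X → EReal}

def epigraphProperCone (hg : SublinearFn g) (hlsc : LowerSemicontinuous g) :
    ProperCone ℝ (X × ℝ) where
  toSubmodule := hg.epigraphCone
  isClosed' := hlsc.isClosed_epigraph.preimage
    (continuous_fst.prodMk (continuous_coe_real_ereal.comp continuous_snd))

theorem exists_separating_functional (hg : SublinearFn g) (hlsc : LowerSemicontinuous g)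
    {x₀ : X} {r : ℝ} (hr : (r : EReal) < g x₀) :
    ∃ (φ : X →L[ℝ] ℝ) (α : ℝ), 0 ≤ α ∧ φ x₀ + r * α < 0 ∧
      ∀ x, ∀ s : ℝ, g x ≤ s → 0 ≤ φ x + s * α := by
  obtain ⟨f, hf, hfx⟩ :=
    (hg.epigraphProperCone hlsc).hyperplane_separation_point (x₀ := (x₀, r)) hr.not_ge
  have hsplit : ∀ x s, f (x, s) = f (x, 0) + s * f (0, 1) := by
    intro x s
    rw [← smul_eq_mul, ← map_smul, ← map_add]
    simp
  refine ⟨f.comp (.inl ℝ X ℝ), f (0, 1),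
    hf (0, 1) (show g 0 ≤ ((1 : ℝ) : EReal) by simp [hg.1]), by simpa [← hsplit] using hfx,
    fun x s hs => ?_⟩
  simpa [← hsplit] using hf (x, s) hs

theorem subdiff0_nonempty (hg : SublinearFn g) (hlsc : LowerSemicontinuous g) :
    (subdiff0 g).Nonempty := by
  obtain ⟨φ, α, -, hlt, hφ⟩ :=
    hg.exists_separating_functional hlsc (x₀ := 0) (r := -1) (by simp [hg.1])
  have hα : 0 < α := by simp only [map_zero, zero_add] at hlt; linarith
  exact ⟨_, neg_inv_smul_mem_subdiff0 hα hφ⟩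

theorem exists_mem_subdiff0_lt (hg : SublinearFn g) (hlsc : LowerSemicontinuous g) {x₀ : X}
    {r : ℝ} (hr : (r : EReal) < g x₀) : ∃ y ∈ subdiff0 g, r < y x₀ := by
  obtain ⟨φ, α, hα, hlt, hφ⟩ := hg.exists_separating_functional hlsc hr
  rcases hα.lt_or_eq with hα | rfl
  · refine ⟨_, neg_inv_smul_mem_subdiff0 hα hφ, ?_⟩
    simp only [StrongDual.coe_toWeakDual, FunLike.coe_smul, Pi.smul_apply, smul_eq_mul]
    rw [neg_mul, lt_neg, ← mul_lt_mul_iff_of_pos_left hα, mul_inv_cancel_left₀ hα.ne']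
    linarith
  -- A vertical separating hyperplane: tilt any subgradient along `-φ`.
  obtain ⟨y₀, hy₀⟩ := hg.subdiff0_nonempty hlsc
  simp only [mul_zero, add_zero] at hlt hφ
  have hc : 0 ≤ (|r - y₀ x₀| + 1) / -φ x₀ := div_nonneg (by positivity) (by linarith)
  refine ⟨y₀ - ((|r - y₀ x₀| + 1) / -φ x₀) • StrongDual.toWeakDual φ, ?_, ?_⟩
  · rw [mem_subdiff0_iff] at hy₀ ⊢
    intro x s hs
    have h₁ := hy₀ x s hs
    have h₂ := hφ x s hs
    change y₀ x - (|r - y₀ x₀| + 1) / -φ x₀ * φ x ≤ s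
    nlinarith
  · change r < y₀ x₀ - (|r - y₀ x₀| + 1) / -φ x₀ * φ x₀
    rw [div_mul_eq_mul_div, div_neg, mul_div_cancel_right₀ _ hlt.ne]
    linarith [le_abs_self (r - y₀ x₀)]

theorem le_iff_forall_mem_subdiff0 (hg : SublinearFn g) (hlsc : LowerSemicontinuous g) {x : X}
    {r : ℝ} : g x ≤ r ↔ ∀ y ∈ subdiff0 g, y x ≤ r :=
  ⟨fun h _ hy => EReal.coe_le_coe_iff.1 ((hy x).trans h), fun h => not_lt.1 fun hr =>
    let ⟨y, hy, hry⟩ := hg.exists_mem_subdiff0_lt hlsc hr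
    (h y hy).not_gt hry⟩

theorem mem_qri_subdiff0_iff (hg : SublinearFn g) (hlsc : LowerSemicontinuous g)
    {xs : WeakDual ℝ X} :
    xs ∈ qri (subdiff0 g) ↔ ∀ x, g x ≤ (xs x : EReal) → g (-x) ≤ (xs (-x) : EReal) := by
  rw [WeakDual.mem_qri_iff convex_subdiff0]
  constructor
  · rintro ⟨-, h⟩ x hx
    have hmin : ∀ b ∈ subdiff0 g, xs (-x) ≤ b (-x) := fun b hb => by
      simpa using EReal.coe_le_coe_iff.1 ((hb x).trans hx)
    exact (hg.le_iff_forall_mem_subdiff0 hlsc).2 fun y hy => (h (-x) hmin y hy).le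
  · intro h
    refine ⟨hg.mem_subdiff0_of_forall_neg_le h, fun x hmin b hb => le_antisymm ?_ (hmin b hb)⟩
    have hneg : g (-x) ≤ (xs (-x) : EReal) :=
      (hg.le_iff_forall_mem_subdiff0 hlsc).2 fun y hy => by simpa using hmin y hy
    have hx := h (-x) hneg
    rw [neg_neg] at hx
    exact EReal.coe_le_coe_iff.1 ((hb x).trans hx)

end Separation

end SublinearFn

variable {X : Type*}

theorem stmt6_general [AddCommGroup X] [Module ℝ X] [TopologicalSpace X] [IsTopologicalAddGroup X]
    [ContinuousSMul ℝ X] [LocallyConvexSpace ℝ X]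
    (g : X → EReal) (hsub : SublinearFn g)
    (hlsc : LowerSemicontinuous g) (xs : WeakDual ℝ X) :
    (xs ∈ qri (subdiff0 g) ↔
      ∃ S : Submodule ℝ X, {x : X | g x ≤ (xs x : EReal)} = (S : Set X)) ∧
    ((∃ S : Submodule ℝ X, {x : X | g x ≤ (xs x : EReal)} = (S : Set X)) ↔
      LxSet g xs = {x : X | g x ≤ (xs x : EReal)}) ∧
    ((∃ S : Submodule ℝ X, {x : X | g x ≤ (xs x : EReal)} = (S : Set X)) ↔
      (xs ∈ subdiff0 g ∧
        ∃ S : Submodule ℝ X, {x : X | g x = (xs x : EReal)} = (S : Set X))) ∧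
    ((xs ∈ subdiff0 g ∧
        ∃ S : Submodule ℝ X, {x : X | g x = (xs x : EReal)} = (S : Set X)) ↔
      (xs ∈ subdiff0 g ∧ LxSet g xs = {x : X | g x = (xs x : EReal)})) := by
  have hb_b' :=
    hsub.exists_submodule_eq_setOf_le_iff.trans (hsub.lxSet_eq_setOf_le_iff (xs := xs)).symm
  have hb_c : (∃ S : Submodule ℝ X, {x : X | g x ≤ (xs x : EReal)} = (S : Set X)) ↔
      (xs ∈ subdiff0 g ∧
        ∃ S : Submodule ℝ X, {x : X | g x = (xs x : EReal)} = (S : Set X)) := by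
    refine ⟨fun hb => ?_, fun ⟨hxs, hc⟩ => by rwa [setOf_le_eq_setOf_eq_of_mem_subdiff0 hxs]⟩
    have hxs := hsub.mem_subdiff0_of_forall_neg_le (hsub.exists_submodule_eq_setOf_le_iff.1 hb)
    exact ⟨hxs, by rwa [← setOf_le_eq_setOf_eq_of_mem_subdiff0 hxs]⟩
  refine ⟨(hsub.mem_qri_subdiff0_iff hlsc).trans hsub.exists_submodule_eq_setOf_le_iff.symm,
    hb_b', hb_c, and_congr_right fun hxs => ?_⟩
  rw [← setOf_le_eq_setOf_eq_of_mem_subdiff0 hxs]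
  exact hb_b'

theorem stmt6 [AddCommGroup X] [Module ℝ X] [TopologicalSpace X] [IsTopologicalAddGroup X]
    [ContinuousSMul ℝ X] [LocallyConvexSpace ℝ X] [T2Space X]
    (g : X → EReal) (hsub : SublinearFn g) (hproper : ∀ x, g x ≠ ⊥)
    (hlsc : LowerSemicontinuous g) (xs : WeakDual ℝ X) :
    (xs ∈ qri (subdiff0 g) ↔
      ∃ S : Submodule ℝ X, {x : X | g x ≤ (xs x : EReal)} = (S : Set X)) ∧
    ((∃ S : Submodule ℝ X, {x : X | g x ≤ (xs x : EReal)} = (S : Set X)) ↔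
      LxSet g xs = {x : X | g x ≤ (xs x : EReal)}) ∧
    ((∃ S : Submodule ℝ X, {x : X | g x ≤ (xs x : EReal)} = (S : Set X)) ↔
      (xs ∈ subdiff0 g ∧
        ∃ S : Submodule ℝ X, {x : X | g x = (xs x : EReal)} = (S : Set X))) ∧
    ((xs ∈ subdiff0 g ∧
        ∃ S : Submodule ℝ X, {x : X | g x = (xs x : EReal)} = (S : Set X)) ↔
      (xs ∈ subdiff0 g ∧ LxSet g xs = {x : X | g x = (xs x : EReal)})) :=
  stmt6_general g hsub hlsc xs
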